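/- In the stage game generalized-rock-paper-scissors-with-duds with m even, the mixed strategy for player 1 that randomizes uniformly over the set of nonduds i with f(i) even guarantees expected utility ≥ 0 against every opponent action a₂ (expected utility exactly 0 if a₂ is a nondud, and 1 if a₂ is a dud); hence it is a maximin strategy. -/

import Mathlib

/-!
Label a nondud `a` by the residue of `f a` in `ZMod m`; since `m` is even, parity is well defined
on `ZMod m`, and the support of the strategy is in bijection with the even residues. Every nondud
beats a dud. Against a nondud labelled `w`, the strategy wins exactly at the residue `w + 1` and
loses exactly at `w - 1` (distinct because `m > 2`); as `w + 1` and `w - 1` have the same parity,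
wins and losses cancel.
-/

/-- In generalized-rock-paper-scissors-with-duds with permutation `f`, an action `i` is a
*dud* iff `m + 1 ≤ f i`; nonduds are the actions `i` with `f i ≤ m`. Player 1's utility
for the action pair `(a₁, a₂)`: if exactly one player plays a dud, that player loses;
if neither plays a dud and `f aᵢ ≡ f a₋ᵢ + 1 (mod m)` then player `i` wins; otherwise
the round is a draw. The winner gets `1`, the loser `-1`, a draw gives `0`. -/
def rpsU (m : ℕ) (f : ℕ → ℕ) (a₁ a₂ : ℕ) : ℤ :=
  if m + 1 ≤ f a₁ ∧ ¬(m + 1 ≤ f a₂) then -1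
  else if m + 1 ≤ f a₂ ∧ ¬(m + 1 ≤ f a₁) then 1
  else if ¬(m + 1 ≤ f a₁) ∧ ¬(m + 1 ≤ f a₂) ∧ f a₁ % m = (f a₂ + 1) % m then 1
  else if ¬(m + 1 ≤ f a₁) ∧ ¬(m + 1 ≤ f a₂) ∧ f a₂ % m = (f a₁ + 1) % m then -1
  else 0

namespace ZMod

theorem bijOn_natCast_Icc (m : ℕ) [NeZero m] :
    Set.BijOn (Nat.cast : ℕ → ZMod m) (Set.Icc 1 m) Set.univ := by
  refine ⟨Set.mapsTo_univ _ _, fun a ha b hb hab => ?_, fun x _ => ?_⟩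
  · have hpred (c : ℕ) (hc : c ∈ Set.Icc 1 m) : ((c - 1 : ℕ) : ZMod m).val = c - 1 :=
      val_natCast_of_lt (by have := NeZero.pos m; grind)
    have hcast : ((a - 1 : ℕ) : ZMod m) = ((b - 1 : ℕ) : ZMod m) := by
      rw [Nat.cast_sub ha.1, Nat.cast_sub hb.1, hab]
    have := congrArg val hcast
    rw [hpred a ha, hpred b hb] at this
    grind
  · refine ⟨(x - 1).val + 1, ⟨Nat.le_add_left 1 _, (x - 1).val_lt⟩, ?_⟩
    simp only [Nat.cast_add, natCast_zmod_val, Nat.cast_one, sub_add_cancel]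

theorem two_ne_zero_of_two_lt {m : ℕ} (hm : 2 < m) : (2 : ZMod m) ≠ 0 := by
  intro h
  have : m ∣ 2 := (natCast_eq_zero_iff 2 m).mp (by exact_mod_cast h)
  exact absurd (Nat.le_of_dvd two_pos this) (by omega)

theorem not_eq_add_one_and_eq_add_one {m : ℕ} (hm : 2 < m) (x y : ZMod m) :
    ¬(x = y + 1 ∧ y = x + 1) := by
  rintro ⟨hx, hy⟩
  apply two_ne_zero_of_two_lt hm
  linear_combination -hx - hy

section Parity

variable {m : ℕ} (h2 : 2 ∣ m)

theorem castHom_natCast_eq_zero_iff (e : ℕ) :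
    ZMod.castHom h2 (ZMod 2) (e : ZMod m) = 0 ↔ e % 2 = 0 := by
  rw [map_natCast, ZMod.natCast_eq_zero_iff, Nat.dvd_iff_mod_eq_zero]

theorem sum_even_ite_eq_add_one_sub_ite_eq_add_one [NeZero m] (w : ZMod m) :
    ∑ x ∈ Finset.univ.filter (fun x : ZMod m => ZMod.castHom h2 (ZMod 2) x = 0),
      ((if x = w + 1 then 1 else 0) - (if w = x + 1 then 1 else 0) : ℤ) = 0 := by
  have hpar : ZMod.castHom h2 (ZMod 2) (w - 1) = ZMod.castHom h2 (ZMod 2) (w + 1) := by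
    rw [map_sub, map_add, map_one, CharTwo.sub_eq_add]
  simp only [eq_comm (a := w), ← eq_sub_iff_add_eq, Finset.sum_sub_distrib, Finset.sum_ite_eq',
    Finset.mem_filter, Finset.mem_univ, true_and, hpar, sub_self]

end Parity

end ZMod

theorem rpsU_of_nondud_of_dud {m : ℕ} {f : ℕ → ℕ} {a₁ a₂ : ℕ} (h₁ : f a₁ ≤ m)
    (h₂ : m + 1 ≤ f a₂) : rpsU m f a₁ a₂ = 1 := by
  simp [rpsU, h₂, show ¬(m + 1 ≤ f a₁) by omega]

theorem rpsU_of_nondud_of_nondud {m : ℕ} {f : ℕ → ℕ} {a₁ a₂ : ℕ} (hm : 2 < m)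
    (h₁ : f a₁ ≤ m) (h₂ : f a₂ ≤ m) :
    rpsU m f a₁ a₂ = (if (f a₁ : ZMod m) = f a₂ + 1 then 1 else 0) -
      (if (f a₂ : ZMod m) = f a₁ + 1 then 1 else 0) := by
  simp only [rpsU, ← Nat.cast_succ, ZMod.natCast_eq_natCast_iff', show ¬(m + 1 ≤ f a₁) by omega,
    show ¬(m + 1 ≤ f a₂) by omega]
  have := ZMod.not_eq_add_one_and_eq_add_one hm (f a₁) (f a₂)
  simp only [← Nat.cast_succ, ZMod.natCast_eq_natCast_iff'] at this
  split_ifs <;> grind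

def evenNonduds (m n : ℕ) (f : ℕ → ℕ) : Finset ℕ :=
  (Finset.Icc 1 (m + n)).filter (fun i => f i ≤ m ∧ f i % 2 = 0)

theorem sum_evenNonduds_eq_sum_even {m n : ℕ} [NeZero m] (h2 : 2 ∣ m) {f : ℕ → ℕ}
    (hf : Set.BijOn f (Set.Icc 1 (m + n)) (Set.Icc 1 (m + n))) {M : Type*} [AddCommMonoid M]
    (g : ZMod m → M) :
    ∑ i ∈ evenNonduds m n f, g (f i) =
      ∑ x ∈ Finset.univ.filter (fun x : ZMod m => ZMod.castHom h2 (ZMod 2) x = 0), g x := by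
  have hcast := (ZMod.bijOn_natCast_Icc m).subset_right
    (r := {x | ZMod.castHom h2 (ZMod 2) x = 0}) (Set.subset_univ _)
  have hf' := hf.subset_right
    (r := Set.Icc 1 m ∩ Nat.cast ⁻¹' {x | ZMod.castHom h2 (ZMod 2) x = 0})
    fun y hy => ⟨hy.1.1, hy.1.2.trans (Nat.le_add_right m n)⟩
  have hdom : (evenNonduds m n f : Set ℕ) =
      Set.Icc 1 (m + n) ∩
        f ⁻¹' (Set.Icc 1 m ∩ Nat.cast ⁻¹' {x | ZMod.castHom h2 (ZMod 2) x = 0}) := by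
    ext i
    have hfi : i ∈ Set.Icc 1 (m + n) → 1 ≤ f i := fun hi => (hf.mapsTo hi).1
    simp only [evenNonduds, Finset.coe_filter, Finset.mem_Icc, Set.mem_inter_iff,
      Set.mem_preimage, Set.mem_Icc, Set.mem_ofPred_eq, ZMod.castHom_natCast_eq_zero_iff] at hfi ⊢
    grind
  have hcod : (Finset.univ.filter (fun x : ZMod m => ZMod.castHom h2 (ZMod 2) x = 0) :
      Set (ZMod m)) = {x | ZMod.castHom h2 (ZMod 2) x = 0} := by
    simp only [Finset.coe_filter, Finset.mem_univ, true_and]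
  have hbij := hcast.comp hf'
  rw [← hdom, ← hcod] at hbij
  exact Finset.sum_nbij _ hbij.mapsTo hbij.injOn hbij.surjOn fun _ _ => rfl

theorem sum_rpsU_evenNonduds_of_nondud {m n : ℕ} (hm : 2 < m) (h2 : 2 ∣ m) {f : ℕ → ℕ}
    (hf : Set.BijOn f (Set.Icc 1 (m + n)) (Set.Icc 1 (m + n))) {a₂ : ℕ} (h₂ : f a₂ ≤ m) :
    ∑ a₁ ∈ evenNonduds m n f, rpsU m f a₁ a₂ = 0 := by
  have : NeZero m := ⟨by omega⟩
  rw [Finset.sum_congr rfl fun a₁ ha₁ =>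
    rpsU_of_nondud_of_nondud hm (Finset.mem_filter.1 ha₁).2.1 h₂]
  exact (sum_evenNonduds_eq_sum_even h2 hf fun x : ZMod m =>
    (if x = f a₂ + 1 then 1 else 0) - (if (f a₂ : ZMod m) = x + 1 then 1 else 0)).trans
    (ZMod.sum_even_ite_eq_add_one_sub_ite_eq_add_one h2 _)

theorem sum_rpsU_evenNonduds_of_dud {m n : ℕ} {f : ℕ → ℕ} {a₂ : ℕ} (h₂ : m + 1 ≤ f a₂) :
    ∑ a₁ ∈ evenNonduds m n f, rpsU m f a₁ a₂ = (evenNonduds m n f).card := by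
  rw [Finset.card_eq_sum_ones, Nat.cast_sum, Nat.cast_one]
  exact Finset.sum_congr rfl fun a₁ ha₁ =>
    rpsU_of_nondud_of_dud (Finset.mem_filter.1 ha₁).2.1 h₂

/-- In the stage game generalized-rock-paper-scissors-with-duds with `m` even, the mixed
strategy for player 1 that randomizes uniformly over the set of nonduds `i` with `f i`
even guarantees expected utility `≥ 0` against every opponent action `a₂` (expected
utility exactly `0` if `a₂` is a nondud, and `1` if `a₂` is a dud); hence it is a
maximin strategy. -/
theorem stmt9 (m n : ℕ) (hm : 2 < m) (hmeven : m % 2 = 0) (f : ℕ → ℕ)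
    (hf : Set.BijOn f (Set.Icc 1 (m + n)) (Set.Icc 1 (m + n))) :
    ∀ a₂ ∈ Finset.Icc 1 (m + n),
      0 ≤ (∑ a₁ ∈ (Finset.Icc 1 (m + n)).filter (fun i => f i ≤ m ∧ f i % 2 = 0),
              (rpsU m f a₁ a₂ : ℝ)) /
            (((Finset.Icc 1 (m + n)).filter (fun i => f i ≤ m ∧ f i % 2 = 0)).card : ℝ) ∧
      (f a₂ ≤ m →
        (∑ a₁ ∈ (Finset.Icc 1 (m + n)).filter (fun i => f i ≤ m ∧ f i % 2 = 0),
              (rpsU m f a₁ a₂ : ℝ)) /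
            (((Finset.Icc 1 (m + n)).filter (fun i => f i ≤ m ∧ f i % 2 = 0)).card : ℝ) = 0) ∧
      (m + 1 ≤ f a₂ →
        (∑ a₁ ∈ (Finset.Icc 1 (m + n)).filter (fun i => f i ≤ m ∧ f i % 2 = 0),
              (rpsU m f a₁ a₂ : ℝ)) /
            (((Finset.Icc 1 (m + n)).filter (fun i => f i ≤ m ∧ f i % 2 = 0)).card : ℝ) = 1) := by
  intro a₂ _
  rw [show (Finset.Icc 1 (m + n)).filter (fun i => f i ≤ m ∧ f i % 2 = 0) = evenNonduds m n f
    from rfl]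
  set S := evenNonduds m n f
  have hS : (S.card : ℝ) ≠ 0 := by
    obtain ⟨i, hi, hfi⟩ := hf.surjOn (show 2 ∈ Set.Icc 1 (m + n) by grind)
    refine Nat.cast_ne_zero.2 (Finset.card_ne_zero_of_mem (a := i) ?_)
    simp only [S, evenNonduds, Finset.mem_filter, Finset.mem_Icc, hfi]
    grind
  have hdud (h₂ : m + 1 ≤ f a₂) : (∑ a₁ ∈ S, (rpsU m f a₁ a₂ : ℝ)) / S.card = 1 := by
    rw [← Int.cast_sum, sum_rpsU_evenNonduds_of_dud h₂, Int.cast_natCast, div_self hS]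
  have hnondud (h₂ : f a₂ ≤ m) : (∑ a₁ ∈ S, (rpsU m f a₁ a₂ : ℝ)) / S.card = 0 := by
    rw [← Int.cast_sum, sum_rpsU_evenNonduds_of_nondud hm (Nat.dvd_of_mod_eq_zero hmeven) hf h₂,
      Int.cast_zero, zero_div]
  refine ⟨?_, hnondud, hdud⟩
  rcases le_or_gt (f a₂) m with h₂ | h₂
  · exact (hnondud h₂).ge
  · exact (hdud h₂).ge.trans' zero_le_one
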